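/- Let K, M, N, d be natural numbers with d ≤ M and d ≤ N − 1 (so that both systems below satisfy the antenna constraints d ≤ min(M, N) and d ≤ min(M + 1, N − 1)). Then the symmetric system (M × N, d)^K is proper if and only if the symmetric system ((M + 1) × (N − 1), d)^K is proper. In particular, transferring one antenna from each receiver to its corresponding transmitter (or vice versa) preserves the proper/improper status of a symmetric system, as long as every node retains at least d antennas. -/

import Mathlib

/-- The set of variables of a `K`-user MIMO interference alignment system:
transmit-beamformer coordinates `(j, n, i)` with `n : Fin (d j)`, `i : Fin (M j - d j)`,
together with receive-filter coordinates `(k, m, i)` with `m : Fin (d k)`,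
`i : Fin (N k - d k)`. -/
abbrev IAVar (K : ℕ) (M N d : Fin K → ℕ) : Type :=
  (Σ j : Fin K, Fin (d j) × Fin (M j - d j)) ⊕ (Σ k : Fin K, Fin (d k) × Fin (N k - d k))

/-- The set of interference alignment equations `(k, j, m, n)` with `k ≠ j`,
`m : Fin (d k)`, `n : Fin (d j)`. -/
abbrev IAEqs (K : ℕ) (d : Fin K → ℕ) : Type :=
  {p : Σ k : Fin K, Σ j : Fin K, Fin (d k) × Fin (d j) // p.1 ≠ p.2.1}

/-- The set of variables involved in the equation `(k, j, m, n)`: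
all transmit variables `inl (j, n, i)` and all receive variables `inr (k, m, i)`. -/
def iaVar {K : ℕ} (M N d : Fin K → ℕ) (e : IAEqs K d) : Finset (IAVar K M N d) :=
  (Finset.univ.image fun i : Fin (M e.1.2.1 - d e.1.2.1) =>
      Sum.inl ⟨e.1.2.1, (e.1.2.2.2, i)⟩)
  ∪ (Finset.univ.image fun i : Fin (N e.1.1 - d e.1.1) =>
      Sum.inr ⟨e.1.1, (e.1.2.2.1, i)⟩)

/-- A system is proper if every subset of equations involves at least as many
variables as equations. -/
def IsProper (K : ℕ) (M N d : Fin K → ℕ) : Prop :=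
  ∀ S : Finset (IAEqs K d), S.card ≤ (S.biUnion (iaVar M N d)).card

/-! Each equation `(k, j, m, n)` of a symmetric system pairs the receive beam `(k, m)` with the
transmit beam `(j, n)` of another user, and involves exactly the `M - d` coordinates of the
transmit beam and the `N - d` coordinates of the receive beam. A set of equations touching `T`
transmit and `R` receive beams therefore involves `T (M - d) + R (N - d)` variables, while each
beam lies in at most `(K - 1) d` equations. Hence the system is proper iff
`(K - 1) d ≤ (M - d) + (N - d)`, the set of all equations showing necessity, and this condition
depends on `M` and `N` only through `M + N` as long as both stay at least `d`. -/

open Finset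

lemma card_le_mul_card_image_of_injective_pair {α ι β : Type*} [Fintype ι] [DecidableEq ι]
    [Fintype β] [DecidableEq β] {f g : α → ι × β} (hfg : Function.Injective fun a => (f a, g a))
    (hne : ∀ a, (f a).1 ≠ (g a).1) (S : Finset α) :
    #S ≤ (Fintype.card ι - 1) * Fintype.card β * #(S.image f) := by
  refine card_le_mul_card_image S _ fun x _ => ?_
  calc #{a ∈ S | f a = x} ≤ #((univ.erase x.1) ×ˢ (univ : Finset β)) := by
        refine card_le_card_of_injOn g (fun a ha => ?_) fun a₁ ha₁ a₂ ha₂ h => hfg ?_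
        · rw [mem_coe, mem_filter] at ha
          simpa [← ha.2] using (hne a).symm
        · rw [mem_coe, mem_filter] at ha₁ ha₂
          simp [ha₁.2, ha₂.2, h]
    _ = (Fintype.card ι - 1) * Fintype.card β := by
        rw [card_product, card_erase_of_mem (mem_univ _), card_univ, card_univ]

section Symmetric

variable {K M N d : ℕ}

-- the transmit beam `(j, n)` and the receive beam `(k, m)` of the equation `(k, j, m, n)`
def txBeam (e : IAEqs K fun _ => d) : Fin K × Fin d := (e.1.2.1, e.1.2.2.2)

def rxBeam (e : IAEqs K fun _ => d) : Fin K × Fin d := (e.1.1, e.1.2.2.1)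

lemma rxBeam_txBeam_injective :
    Function.Injective fun e : IAEqs K (fun _ => d) => (rxBeam e, txBeam e) := by
  rintro ⟨⟨k, j, m, n⟩, _⟩ ⟨⟨k', j', m', n'⟩, _⟩ h
  simp only [rxBeam, txBeam, Prod.mk.injEq] at h
  obtain ⟨⟨rfl, rfl⟩, rfl, rfl⟩ := h
  rfl

variable (M N) in
def txVars (T : Finset (Fin K × Fin d)) : Finset (IAVar K (fun _ => M) (fun _ => N) fun _ => d) :=
  (T ×ˢ univ).image fun x => .inl ⟨x.1.1, x.1.2, x.2⟩

variable (M N) in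
def rxVars (R : Finset (Fin K × Fin d)) : Finset (IAVar K (fun _ => M) (fun _ => N) fun _ => d) :=
  (R ×ˢ univ).image fun x => .inr ⟨x.1.1, x.1.2, x.2⟩

lemma biUnion_iaVar (S : Finset (IAEqs K fun _ => d)) :
    S.biUnion (iaVar (fun _ => M) (fun _ => N) fun _ => d) =
      txVars M N (S.image txBeam) ∪ rxVars M N (S.image rxBeam) := by
  ext (⟨j, n, i⟩ | ⟨k, m, i⟩) <;> simp [iaVar, txVars, rxVars, txBeam, rxBeam]

lemma card_txVars (T : Finset (Fin K × Fin d)) : #(txVars M N T) = #T * (M - d) := by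
  rw [txVars, card_image_of_injective _ (by rintro ⟨⟨_, _⟩, _⟩ ⟨⟨_, _⟩, _⟩ h; simp_all),
    card_product, card_univ, Fintype.card_fin]

lemma card_rxVars (R : Finset (Fin K × Fin d)) : #(rxVars M N R) = #R * (N - d) := by
  rw [rxVars, card_image_of_injective _ (by rintro ⟨⟨_, _⟩, _⟩ ⟨⟨_, _⟩, _⟩ h; simp_all),
    card_product, card_univ, Fintype.card_fin]

lemma card_biUnion_iaVar (S : Finset (IAEqs K fun _ => d)) :
    #(S.biUnion (iaVar (fun _ => M) (fun _ => N) fun _ => d)) =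
      #(S.image txBeam) * (M - d) + #(S.image rxBeam) * (N - d) := by
  rw [biUnion_iaVar, card_union_of_disjoint, card_txVars, card_rxVars]
  simp [disjoint_left, txVars, rxVars]

lemma isProper_const_of_le (h : (K - 1) * d ≤ (M - d) + (N - d)) :
    IsProper K (fun _ => M) (fun _ => N) fun _ => d := by
  intro S
  have hrx := card_le_mul_card_image_of_injective_pair rxBeam_txBeam_injective (fun e => e.2) S
  have htx := card_le_mul_card_image_of_injective_pair
    (Prod.swap_injective.comp rxBeam_txBeam_injective) (fun e => Ne.symm e.2) S
  simp only [Fintype.card_fin] at hrx htx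
  rw [card_biUnion_iaVar]
  calc #S ≤ (K - 1) * d * min #(S.image txBeam) #(S.image rxBeam) := by
        rw [mul_min]; exact le_min htx hrx
    _ ≤ ((M - d) + (N - d)) * min #(S.image txBeam) #(S.image rxBeam) := by gcongr
    _ ≤ #(S.image txBeam) * (M - d) + #(S.image rxBeam) * (N - d) := by
        rw [add_mul, mul_comm, mul_comm (N - d)]
        gcongr
        exacts [min_le_left _ _, min_le_right _ _]

def iaEqsConstEquiv (K d : ℕ) :
    IAEqs K (fun _ => d) ≃ {p : Fin K × Fin K // p.1 ≠ p.2} × (Fin d × Fin d) where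
  toFun e := (⟨(e.1.1, e.1.2.1), e.2⟩, e.1.2.2)
  invFun x := ⟨⟨x.1.1.1, x.1.1.2, x.2⟩, x.1.2⟩
  left_inv _ := rfl
  right_inv _ := rfl

lemma card_iaEqs_const : Fintype.card (IAEqs K fun _ => d) = K * (K - 1) * (d * d) := by
  have hoffDiag : ({p | p.1 ≠ p.2} : Finset (Fin K × Fin K)) = univ.offDiag := by ext; simp
  rw [Fintype.card_congr (iaEqsConstEquiv K d), Fintype.card_prod, Fintype.card_subtype,
    hoffDiag, offDiag_card]
  simp [Nat.mul_sub_one]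

lemma le_of_isProper_const (h : IsProper K (fun _ => M) (fun _ => N) fun _ => d) :
    (K - 1) * d ≤ (M - d) + (N - d) := by
  rcases Nat.eq_zero_or_pos (K * d) with hKd | hKd
  · rcases Nat.mul_eq_zero.mp hKd with rfl | rfl <;> simp
  have hcard := h univ
  rw [card_univ, card_iaEqs_const, card_biUnion_iaVar] at hcard
  have hbeams (f : IAEqs K (fun _ => d) → Fin K × Fin d) : #(univ.image f) ≤ K * d := by
    simpa using card_le_univ (univ.image f)
  refine Nat.le_of_mul_le_mul_left ?_ hKd
  calc K * d * ((K - 1) * d) = K * (K - 1) * (d * d) := by ring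
    _ ≤ #(univ.image txBeam) * (M - d) + #(univ.image rxBeam) * (N - d) := hcard
    _ ≤ K * d * (M - d) + K * d * (N - d) := by gcongr <;> exact hbeams _
    _ = K * d * ((M - d) + (N - d)) := by ring

lemma isProper_const_iff :
    IsProper K (fun _ => M) (fun _ => N) (fun _ => d) ↔ (K - 1) * d ≤ (M - d) + (N - d) :=
  ⟨le_of_isProper_const, isProper_const_of_le⟩

end Symmetric

/-- **Corollary 2 of the paper.** Transferring one antenna from each receiver to its
corresponding transmitter preserves the proper/improper status of a symmetric system,
as long as every node retains at least `d` antennas: if `d ≤ M` and `d ≤ N - 1`, then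
`(M × N, d)^K` is proper iff `((M + 1) × (N - 1), d)^K` is proper. -/
theorem symmetric_proper_antenna_transfer (K M N d : ℕ) (hdM : d ≤ M) (hdN : d ≤ N - 1) :
    IsProper K (fun _ => M) (fun _ => N) (fun _ => d) ↔
      IsProper K (fun _ => M + 1) (fun _ => N - 1) (fun _ => d) := by
  rw [isProper_const_iff, isProper_const_iff]
  -- for `d = 0` the hypothesis `d ≤ N - 1` allows `N = 0`, where `N - 1` truncates
  rcases Nat.eq_zero_or_pos d with rfl | hd
  · simp
  · have hvars : M + 1 - d + (N - 1 - d) = M - d + (N - d) := by omega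
    rw [hvars]
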